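/- (Andreief's identity) Let $(X,\mu)$ be a measure space, let $n$ be a positive integer, and let $f_1,\dots,f_n$ and $g_1,\dots,g_n$ be integrable functions on $X$ such that all products $f_j g_k$ are integrable. Then $\int_{X^n} \det(f_j(x_k))_{1\le j,k\le n} \cdot \det(g_j(x_k))_{1\le j,k\le n} \, d\mu(x_1)\cdots d\mu(x_n) = n! \cdot \det\left(\int_X f_j(x) g_k(x)\, d\mu(x)\right)_{1\le j,k\le n}$. -/

import Mathlib

/-!
Expanding both determinants over permutations writes the integrand as a signed double sum of
products `∏ k, f (σ k) (x k) * g (τ k) (x k)`. Each product integrates, by Fubini, to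
`∏ k, A (σ k) (τ k)` with `A j k = ∫ f j * g k`, and for fixed `σ` the signed sum over `τ` is
`sign σ * det (A.submatrix σ id) = det A`, which gives the factor `n!`.
Since an integrable function vanishes off a set on which `μ` is σ-finite, Fubini for such
products holds for an arbitrary measure `μ`, once `Measure.pi` is compared with its restriction
to a product of such sets.
-/

open MeasureTheory Set Equiv

namespace MeasureTheory.Measure

variable {ι : Type*} [Fintype ι] {α : ι → Type*} [∀ i, MeasurableSpace (α i)]

theorem pi_pi_le (μ : ∀ i, Measure (α i)) {s : ∀ i, Set (α i)} (hs : ∀ i, MeasurableSet (s i)) :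
    Measure.pi μ (univ.pi s) ≤ ∏ i, μ i (s i) := by
  rw [Measure.pi_def, toMeasure_apply _ _ (.univ_pi hs)]
  exact OuterMeasure.pi_pi_le _ s

theorem pi_mono {μ ν : ∀ i, Measure (α i)} (h : ∀ i, μ i ≤ ν i) :
    Measure.pi μ ≤ Measure.pi ν := by
  have hle : OuterMeasure.pi (fun i ↦ (μ i).toOuterMeasure)
      ≤ OuterMeasure.pi (fun i ↦ (ν i).toOuterMeasure) :=
    OuterMeasure.le_pi.2 fun s _ ↦
      (OuterMeasure.pi_pi_le _ s).trans (Finset.prod_le_prod' fun i _ ↦ h i (s i))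
  refine Measure.le_iff.2 fun s hs ↦ ?_
  simp only [Measure.pi_def, toMeasure_apply _ _ hs]
  exact hle s

theorem ae_eval_of_ae (μ : ∀ i, Measure (α i)) {i : ι} {p : α i → Prop}
    (h : ∀ᵐ y ∂μ i, p y) : ∀ᵐ x ∂Measure.pi μ, p (x i) := by
  classical
  obtain ⟨t, hpt, htm, hμt⟩ := exists_measurable_superset_of_null (ae_iff.1 h)
  refine ae_iff.2 (measure_mono_null (preimage_mono hpt) (nonpos_iff_eq_zero.1 ?_))
  calc Measure.pi μ (Function.eval i ⁻¹' t)
      = Measure.pi μ (univ.pi (Function.update (fun j ↦ univ) i t)) := by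
        rw [univ_pi_update_univ]
    _ ≤ ∏ j, μ j (Function.update (fun j ↦ univ) i t j) :=
        pi_pi_le μ fun j ↦ by
          rcases eq_or_ne j i with rfl | hj
          · simpa using htm
          · simp [hj]
    _ = 0 := Finset.prod_eq_zero (Finset.mem_univ i) (by simpa using hμt)

theorem restrict_pi_pi_of_sigmaFinite (μ : ∀ i, Measure (α i)) {s : ∀ i, Set (α i)}
    (hs : ∀ i, MeasurableSet (s i)) [∀ i, SigmaFinite ((μ i).restrict (s i))] :
    (Measure.pi μ).restrict (univ.pi s) = Measure.pi fun i ↦ (μ i).restrict (s i) := by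
  refine (pi_eq fun b hb ↦ ?_).symm
  have hbs : ∀ i, MeasurableSet (b i ∩ s i) := fun i ↦ (hb i).inter (hs i)
  have hprod : ∏ i, (μ i).restrict (s i) (b i) = ∏ i, μ i (b i ∩ s i) :=
    Finset.prod_congr rfl fun i _ ↦ restrict_apply (hb i)
  rw [restrict_apply (.univ_pi hb), ← pi_inter_distrib, hprod]
  refine le_antisymm (pi_pi_le μ hbs) ?_
  calc ∏ i, μ i (b i ∩ s i)
      = Measure.pi (fun i ↦ (μ i).restrict (s i)) (univ.pi fun i ↦ b i ∩ s i) := by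
        rw [pi_pi]
        exact Finset.prod_congr rfl fun i _ ↦ by
          rw [restrict_apply (hbs i), inter_assoc, inter_self]
    _ ≤ Measure.pi μ (univ.pi fun i ↦ b i ∩ s i) :=
        pi_mono (fun _ ↦ restrict_le_self) _

end MeasureTheory.Measure

namespace MeasureTheory

theorem Integrable.exists_sigmaFinite_ae_eq_zero {α E : Type*} [MeasurableSpace α]
    [NormedAddCommGroup E] {μ : Measure α} {f : α → E} (hf : Integrable f μ) :
    ∃ t, MeasurableSet t ∧ SigmaFinite (μ.restrict t) ∧ ∀ᵐ y ∂μ, y ∉ t → f y = 0 := by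
  obtain ⟨t, htm, hzero, hσ⟩ := hf.aefinStronglyMeasurable.exists_set_sigmaFinite
  exact ⟨t, htm, hσ, (ae_restrict_iff' htm.compl).1 hzero⟩

variable {ι 𝕜 : Type*} [Fintype ι] {α : ι → Type*} [∀ i, MeasurableSpace (α i)]
  {μ : ∀ i, Measure (α i)}

theorem ae_prod_eq_zero_of_ae_eq_zero [CommMonoidWithZero 𝕜] {f : ∀ i, α i → 𝕜}
    {t : ∀ i, Set (α i)} (h : ∀ i, ∀ᵐ y ∂μ i, y ∉ t i → f i y = 0) :
    ∀ᵐ x ∂Measure.pi μ, x ∉ univ.pi t → ∏ i, f i (x i) = 0 := by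
  filter_upwards [ae_all_iff.2 fun i ↦ Measure.ae_eval_of_ae μ (h i)] with x hx hxt
  obtain ⟨i, hi⟩ : ∃ i, x i ∉ t i := by simpa [mem_univ_pi] using hxt
  exact Finset.prod_eq_zero (Finset.mem_univ i) (hx i hi)

theorem Integrable.fintype_prod_of_integrable [NormedCommRing 𝕜] {f : ∀ i, α i → 𝕜}
    (hf : ∀ i, Integrable (f i) (μ i)) :
    Integrable (fun x : ∀ i, α i ↦ ∏ i, f i (x i)) (Measure.pi μ) := by
  choose t htm hσ hzero using fun i ↦ (hf i).exists_sigmaFinite_ae_eq_zero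
  refine IntegrableOn.integrable_of_ae_notMem_eq_zero ?_ (ae_prod_eq_zero_of_ae_eq_zero hzero)
  rw [IntegrableOn, Measure.restrict_pi_pi_of_sigmaFinite μ htm]
  exact .fintype_prod_dep fun i ↦ (hf i).restrict

theorem integral_fintype_prod_eq_prod_of_integrable [RCLike 𝕜] {f : ∀ i, α i → 𝕜}
    (hf : ∀ i, Integrable (f i) (μ i)) :
    ∫ x, ∏ i, f i (x i) ∂Measure.pi μ = ∏ i, ∫ y, f i y ∂μ i := by
  choose t htm hσ hzero using fun i ↦ (hf i).exists_sigmaFinite_ae_eq_zero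
  calc ∫ x, ∏ i, f i (x i) ∂Measure.pi μ
      = ∫ x in univ.pi t, ∏ i, f i (x i) ∂Measure.pi μ :=
        (setIntegral_eq_integral_of_ae_compl_eq_zero (ae_prod_eq_zero_of_ae_eq_zero hzero)).symm
    _ = ∏ i, ∫ y in t i, f i y ∂μ i := by
        rw [Measure.restrict_pi_pi_of_sigmaFinite μ htm, integral_fintype_prod_eq_prod]
    _ = ∏ i, ∫ y, f i y ∂μ i :=
        Finset.prod_congr rfl fun i _ ↦ setIntegral_eq_integral_of_ae_compl_eq_zero (hzero i)

end MeasureTheory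

namespace Matrix

variable {n R : Type*} [Fintype n] [DecidableEq n] [CommRing R]

theorem det_mul_det_eq_sum_sum (A B : Matrix n n R) :
    A.det * B.det = ∑ σ : Perm n, ∑ τ : Perm n,
      ((Perm.sign σ : R) * (Perm.sign τ : R)) * ∏ k, A (σ k) k * B (τ k) k := by
  rw [det_apply', det_apply', Finset.sum_mul_sum]
  refine Finset.sum_congr rfl fun σ _ ↦ Finset.sum_congr rfl fun τ _ ↦ ?_
  rw [Finset.prod_mul_distrib]
  ring

theorem sum_sum_sign_mul_prod_eq_factorial_mul_det (A : Matrix n n R) :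
    ∑ σ : Perm n, ∑ τ : Perm n, ((Perm.sign σ : R) * (Perm.sign τ : R)) * ∏ k, A (σ k) (τ k)
      = (Fintype.card n).factorial * A.det := by
  have hinner : ∀ σ : Perm n,
      ∑ τ : Perm n, ((Perm.sign σ : R) * (Perm.sign τ : R)) * ∏ k, A (σ k) (τ k) = A.det := by
    intro σ
    have hrow : ∑ τ : Perm n, (Perm.sign τ : R) * ∏ k, A (σ k) (τ k) = Perm.sign σ * A.det := by
      rw [← det_permute, ← det_transpose, det_apply']
      rfl
    simp_rw [mul_assoc, ← Finset.mul_sum, hrow, ← mul_assoc, ← Int.cast_mul, ← Units.val_mul,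
      Int.units_mul_self, Units.val_one, Int.cast_one, one_mul]
  rw [Finset.sum_congr rfl fun σ _ ↦ hinner σ, Finset.sum_const, Finset.card_univ,
    Fintype.card_perm, nsmul_eq_mul]

end Matrix

theorem stmt_1_general {X : Type*} [MeasurableSpace X] (μ : Measure X) (n : ℕ)
    (f g : Fin n → X → ℝ)
    (hfg : ∀ j k, Integrable (fun x => f j x * g k x) μ) :
    ∫ x : Fin n → X,
        (Matrix.det (Matrix.of fun j k => f j (x k))) *
        (Matrix.det (Matrix.of fun j k => g j (x k)))
        ∂(Measure.pi fun _ : Fin n => μ) =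
    (Nat.factorial n : ℝ) *
      Matrix.det (Matrix.of fun j k => ∫ x, f j x * g k x ∂μ) := by
  have hterm : ∀ σ τ : Perm (Fin n),
      Integrable (fun x : Fin n → X ↦ ∏ k, f (σ k) (x k) * g (τ k) (x k))
        (Measure.pi fun _ ↦ μ) :=
    fun σ τ ↦ Integrable.fintype_prod_of_integrable fun k ↦ hfg (σ k) (τ k)
  have hgram := Matrix.sum_sum_sign_mul_prod_eq_factorial_mul_det
    (Matrix.of fun j k ↦ ∫ x, f j x * g k x ∂μ)
  rw [Fintype.card_fin] at hgram
  simp_rw [Matrix.det_mul_det_eq_sum_sum, Matrix.of_apply]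
  rw [integral_finsetSum _ fun σ _ ↦ integrable_finsetSum _ fun τ _ ↦ (hterm σ τ).const_mul _,
    ← hgram]
  refine Finset.sum_congr rfl fun σ _ ↦ ?_
  rw [integral_finsetSum _ fun τ _ ↦ (hterm σ τ).const_mul _]
  refine Finset.sum_congr rfl fun τ _ ↦ ?_
  rw [integral_const_mul,
    integral_fintype_prod_eq_prod_of_integrable fun k ↦ hfg (σ k) (τ k)]
  rfl

/-- Andreief's identity: for integrable functions `f₁,…,fₙ` and `g₁,…,gₙ` on a
measure space `(X, μ)` with all products `fⱼ gₖ` integrable,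
`∫_{Xⁿ} det(fⱼ(xₖ)) det(gⱼ(xₖ)) dμⁿ = n! · det(∫ fⱼ g_k dμ)`. -/
theorem stmt_1 {X : Type*} [MeasurableSpace X] (μ : Measure X) (n : ℕ) (hn : 0 < n)
    (f g : Fin n → X → ℝ)
    (hf : ∀ j, Integrable (f j) μ) (hg : ∀ j, Integrable (g j) μ)
    (hfg : ∀ j k, Integrable (fun x => f j x * g k x) μ) :
    ∫ x : Fin n → X,
        (Matrix.det (Matrix.of fun j k => f j (x k))) *
        (Matrix.det (Matrix.of fun j k => g j (x k)))
        ∂(Measure.pi fun _ : Fin n => μ) =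
    (Nat.factorial n : ℝ) *
      Matrix.det (Matrix.of fun j k => ∫ x, f j x * g k x ∂μ) :=
  stmt_1_general μ n f g hfg
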